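/- Let V be a finite set of N nodes partitioned into two sensitive groups S₀ and S₁ of sizes N₀ ≥ 1 and N₁ ≥ 1, and fix α > 0. For F : V → ℝ^d, define the MMD loss ℓ_MMD(F) = (1/N₀²)·Σ_{i∈S₀} Σ_{j∈S₀} k(F_i, F_j) + (1/N₁²)·Σ_{i∈S₁} Σ_{j∈S₁} k(F_i, F_j) − (2/(N₀N₁))·Σ_{i∈S₀} Σ_{j∈S₁} k(F_i, F_j). Define P(F) ∈ ℝ^{V×V} by: for i ≠ j, P(F)_{ij} = −k(F_i, F_j)/N_t² if i and j both lie in group S_t (t ∈ {0,1}), and P(F)_{ij} = k(F_i, F_j)/(N₀N₁) if i and j lie in different groups; P(F)_{ii} = −Σ_{m≠i} P(F)_{im}. Then for every node i, the negative gradient of ℓ_MMD with respect to the row F_i satisfies −∇_{F_i} ℓ_MMD(F) = 4α·Σ_{j∈V} P(F)_{ij}·F_j. -/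

import Mathlib

open Finset

/-!
Write `ℓ_MMD(F) = Σ_{a,b} w_{ab} k(F_a, F_b)` with symmetric weights `w`. The row `F_i` enters only
the terms with `a = i` or `b = i` (the term `k(F_i, F_i) = 1` is constant), so
`∇_{F_i} ℓ_MMD = 2 Σ_j w_{ij} ∇_x k(F_i, F_j) = −4α Σ_j w_{ij} k(F_i, F_j) (F_i − F_j)`.
Off the diagonal `P(F)_{ij} = −w_{ij} k(F_i, F_j)`, and the rows of `P(F)` sum to zero, so
`Σ_j P(F)_{ij} F_j = Σ_j P(F)_{ij} (F_j − F_i)`, which is the claim.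
-/

/-- RBF kernel `k(x,y) = exp(-α‖x-y‖²)`. -/
noncomputable def ker {d : ℕ} (α : ℝ) (x y : EuclideanSpace ℝ (Fin d)) : ℝ :=
  Real.exp (-α * ‖x - y‖ ^ 2)

/-- The sensitive group `S_b`, where group membership is given by `grp`
(`false` encodes `S₀` and `true` encodes `S₁`). -/
def sgrp {V : Type*} [Fintype V] (grp : V → Bool) (b : Bool) : Finset V :=
  Finset.univ.filter (fun i => grp i = b)

/-- The MMD loss
`ℓ_MMD(F) = (1/N₀²)·Σ_{i∈S₀}Σ_{j∈S₀} k(F_i,F_j) + (1/N₁²)·Σ_{i∈S₁}Σ_{j∈S₁} k(F_i,F_j)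
           − (2/(N₀N₁))·Σ_{i∈S₀}Σ_{j∈S₁} k(F_i,F_j)`. -/
noncomputable def lMMD {V : Type*} [Fintype V] {d : ℕ} (α : ℝ) (grp : V → Bool)
    (F : V → EuclideanSpace ℝ (Fin d)) : ℝ :=
  (1 / ((sgrp grp false).card : ℝ) ^ 2) *
      ∑ i ∈ sgrp grp false, ∑ j ∈ sgrp grp false, ker α (F i) (F j)
    + (1 / ((sgrp grp true).card : ℝ) ^ 2) *
        ∑ i ∈ sgrp grp true, ∑ j ∈ sgrp grp true, ker α (F i) (F j)
    - (2 / (((sgrp grp false).card : ℝ) * ((sgrp grp true).card : ℝ))) *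
        ∑ i ∈ sgrp grp false, ∑ j ∈ sgrp grp true, ker α (F i) (F j)

/-- Off-diagonal entries of `P(F)`: `−k(F_i,F_j)/N_t²` if `i, j` both lie in group `S_t`, and
`k(F_i,F_j)/(N₀N₁)` if they lie in different groups. -/
noncomputable def Poff {V : Type*} [Fintype V] {d : ℕ} (α : ℝ) (grp : V → Bool)
    (F : V → EuclideanSpace ℝ (Fin d)) (i j : V) : ℝ :=
  if grp i = grp j then -ker α (F i) (F j) / ((sgrp grp (grp i)).card : ℝ) ^ 2
  else ker α (F i) (F j) / (((sgrp grp false).card : ℝ) * ((sgrp grp true).card : ℝ))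

/-- The matrix `P(F)`: off-diagonal entries given by `Poff` and diagonal entries
`P(F)_{ii} = −Σ_{m≠i} P(F)_{im}`. -/
noncomputable def Pmat {V : Type*} [Fintype V] [DecidableEq V] {d : ℕ} (α : ℝ)
    (grp : V → Bool) (F : V → EuclideanSpace ℝ (Fin d)) (i j : V) : ℝ :=
  if i = j then -∑ m ∈ Finset.univ.erase i, Poff α grp F i m
  else Poff α grp F i j

section Gradient

variable {E : Type*} [NormedAddCommGroup E] [InnerProductSpace ℝ E] [CompleteSpace E]
  {x : E}

theorem HasGradientAt.const_mul {f : E → ℝ} {f' : E} (c : ℝ) (hf : HasGradientAt f f' x) :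
    HasGradientAt (fun y => c * f y) (c • f') x := by
  rw [hasGradientAt_iff_hasFDerivAt, map_smul]
  exact hf.hasFDerivAt.const_mul c

theorem HasGradientAt.fun_sum {ι : Type*} (s : Finset ι) {f : ι → E → ℝ} {f' : ι → E}
    (h : ∀ j ∈ s, HasGradientAt (f j) (f' j) x) :
    HasGradientAt (fun y => ∑ j ∈ s, f j y) (∑ j ∈ s, f' j) x := by
  rw [hasGradientAt_iff_hasFDerivAt, map_sum]
  exact HasFDerivAt.fun_sum fun j hj => (h j hj).hasFDerivAt

end Gradient

theorem sum_ite_neg_sum_erase_smul {V M : Type*} [Fintype V] [DecidableEq V] [AddCommGroup M]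
    [Module ℝ M] (p : V → ℝ) (v : V → M) (i : V) :
    ∑ j, (if i = j then -∑ m ∈ univ.erase i, p m else p j) • v j = ∑ j, p j • (v j - v i) := by
  have hoff : ∑ j ∈ univ.erase i, (if i = j then -∑ m ∈ univ.erase i, p m else p j) • v j =
      ∑ j ∈ univ.erase i, p j • v j :=
    sum_congr rfl fun j hj => by rw [if_neg (ne_of_mem_erase hj).symm]
  rw [← add_sum_erase _ _ (mem_univ i), ← add_sum_erase _ _ (mem_univ i), hoff, if_pos rfl]
  simp only [sub_self, smul_zero, zero_add, smul_sub, sum_sub_distrib, ← sum_smul, neg_smul]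
  abel

section Kernel

variable {d : ℕ} (α : ℝ)

theorem ker_comm (x y : EuclideanSpace ℝ (Fin d)) : ker α x y = ker α y x := by
  simp [ker, norm_sub_rev]

theorem ker_self (x : EuclideanSpace ℝ (Fin d)) : ker α x x = 1 := by
  simp [ker]

theorem hasGradientAt_ker (x y : EuclideanSpace ℝ (Fin d)) :
    HasGradientAt (fun z => ker α z y) ((-(2 * α) * ker α x y) • (x - y)) x := by
  refine (((hasFDerivAt_id x).sub_const y).norm_sq.const_mul (-α)).exp.congr_fderiv ?_
  ext z
  simp [ker]
  ring

end Kernel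

section PairSum

variable {V : Type*} [DecidableEq V] {d : ℕ} (α : ℝ)

theorem hasGradientAt_ker_update (F : V → EuclideanSpace ℝ (Fin d)) (i a b : V) :
    HasGradientAt (fun x => ker α (Function.update F i x a) (Function.update F i x b))
      ((if a = i then (-(2 * α) * ker α (F i) (F b)) • (F i - F b) else 0) +
        (if b = i then (-(2 * α) * ker α (F i) (F a)) • (F i - F a) else 0)) (F i) := by
  by_cases ha : a = i <;> by_cases hb : b = i
  · simpa [ha, hb, ker_self] using hasGradientAt_const (F i) (1 : ℝ)
  · simpa [ha, hb] using hasGradientAt_ker α (F i) (F b)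
  · simpa [ha, hb, ker_comm α (F a)] using hasGradientAt_ker α (F i) (F a)
  · simpa [ha, hb] using hasGradientAt_const (F i) (ker α (F a) (F b))

theorem hasGradientAt_sum_mul_ker_update [Fintype V] (w : V → V → ℝ) (hw : ∀ a b, w a b = w b a)
    (F : V → EuclideanSpace ℝ (Fin d)) (i : V) :
    HasGradientAt
      (fun x => ∑ a, ∑ b, w a b * ker α (Function.update F i x a) (Function.update F i x b))
      (∑ j, (-(4 * α) * w i j * ker α (F i) (F j)) • (F i - F j)) (F i) := by
  convert HasGradientAt.fun_sum univ fun a _ => HasGradientAt.fun_sum univ fun b _ =>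
    (hasGradientAt_ker_update α F i a b).const_mul (w a b) using 1
  simp only [smul_add, smul_ite, smul_zero, sum_add_distrib, sum_ite_irrel, sum_const_zero,
    sum_ite_eq', mem_univ, if_true, ← hw i]
  rw [← sum_add_distrib]
  refine sum_congr rfl fun j _ => ?_
  module

end PairSum

section MMD

variable {V : Type*} [Fintype V] {d : ℕ} (α : ℝ) (grp : V → Bool)

/-- The weight of a pair of groups when `ℓ_MMD` is written as a symmetric quadratic form in the
kernel values; the cross term `−2/(N₀N₁)` is split evenly between `(S₀, S₁)` and `(S₁, S₀)`. -/
noncomputable def mmdCoeff (s t : Bool) : ℝ :=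
  if s = t then 1 / ((sgrp grp s).card : ℝ) ^ 2
  else -1 / (((sgrp grp false).card : ℝ) * ((sgrp grp true).card : ℝ))

theorem mmdCoeff_comm (s t : Bool) : mmdCoeff grp s t = mmdCoeff grp t s := by
  by_cases h : s = t
  · rw [h]
  · rw [mmdCoeff, mmdCoeff, if_neg h, if_neg (Ne.symm h)]

theorem Poff_eq_neg_mmdCoeff_mul_ker (F : V → EuclideanSpace ℝ (Fin d)) (i j : V) :
    Poff α grp F i j = -(mmdCoeff grp (grp i) (grp j) * ker α (F i) (F j)) := by
  unfold Poff mmdCoeff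
  split_ifs <;> ring

theorem sum_sum_eq_sum_sgrp {M : Type*} [AddCommMonoid M] (f : V → V → M) :
    ∑ a, ∑ b, f a b = ∑ s, ∑ t, ∑ a ∈ sgrp grp s, ∑ b ∈ sgrp grp t, f a b := by
  rw [← sum_fiberwise univ grp]
  refine sum_congr rfl fun s _ => ?_
  rw [sum_comm, ← sum_fiberwise univ grp]
  exact sum_congr rfl fun t _ => sum_comm

theorem lMMD_eq_sum_mmdCoeff_mul_ker (F : V → EuclideanSpace ℝ (Fin d)) :
    lMMD α grp F = ∑ a, ∑ b, mmdCoeff grp (grp a) (grp b) * ker α (F a) (F b) := by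
  have hblock : ∀ s t, ∑ a ∈ sgrp grp s, ∑ b ∈ sgrp grp t,
      mmdCoeff grp (grp a) (grp b) * ker α (F a) (F b) =
      mmdCoeff grp s t * ∑ a ∈ sgrp grp s, ∑ b ∈ sgrp grp t, ker α (F a) (F b) := by
    intro s t
    simp only [mul_sum]
    refine sum_congr rfl fun a ha => sum_congr rfl fun b hb => ?_
    rw [(mem_filter.1 ha).2, (mem_filter.1 hb).2]
  have hcross : ∑ a ∈ sgrp grp true, ∑ b ∈ sgrp grp false, ker α (F a) (F b) =
      ∑ a ∈ sgrp grp false, ∑ b ∈ sgrp grp true, ker α (F a) (F b) := by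
    rw [sum_comm]
    exact sum_congr rfl fun a _ => sum_congr rfl fun b _ => ker_comm α (F b) (F a)
  simp only [sum_sum_eq_sum_sgrp grp, Fintype.sum_bool, hblock, hcross]
  simp only [lMMD, mmdCoeff, if_pos, Bool.true_eq_false, Bool.false_eq_true, if_false]
  ring

end MMD

theorem stmt3_general {V : Type*} [Fintype V] [DecidableEq V] {d : ℕ} {α : ℝ}
    (grp : V → Bool)
    (F : V → EuclideanSpace ℝ (Fin d)) (i : V) :
    HasGradientAt (fun x : EuclideanSpace ℝ (Fin d) => lMMD α grp (Function.update F i x))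
      (-((4 * α) • ∑ j : V, Pmat α grp F i j • F j)) (F i) := by
  have hP : ∑ j, Pmat α grp F i j • F j = ∑ j, Poff α grp F i j • (F j - F i) :=
    sum_ite_neg_sum_erase_smul (Poff α grp F i) F i
  simp only [lMMD_eq_sum_mmdCoeff_mul_ker]
  convert hasGradientAt_sum_mul_ker_update α (fun a b => mmdCoeff grp (grp a) (grp b))
    (fun a b => mmdCoeff_comm grp (grp a) (grp b)) F i using 1
  simp only [hP, Poff_eq_neg_mmdCoeff_mul_ker, smul_sum, ← sum_neg_distrib]
  refine sum_congr rfl fun j _ => ?_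
  module

/-- For every node `i`, the negative gradient of `ℓ_MMD` with respect to the row `F_i`
satisfies `−∇_{F_i} ℓ_MMD(F) = 4α·Σ_{j∈V} P(F)_{ij}·F_j`. -/
theorem stmt3 {V : Type*} [Fintype V] [DecidableEq V] {d : ℕ} {α : ℝ} (hα : 0 < α)
    (grp : V → Bool) (N₀ N₁ : ℕ)
    (hcard0 : (sgrp grp false).card = N₀) (hcard1 : (sgrp grp true).card = N₁)
    (hN₀ : 1 ≤ N₀) (hN₁ : 1 ≤ N₁)
    (F : V → EuclideanSpace ℝ (Fin d)) (i : V) :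
    HasGradientAt (fun x : EuclideanSpace ℝ (Fin d) => lMMD α grp (Function.update F i x))
      (-((4 * α) • ∑ j : V, Pmat α grp F i j • F j)) (F i) :=
  stmt3_general grp F i
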